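/- Let H, J be Hermitian matrices with ‖D‖, ‖J‖ ≤ 1 and δ > 0 with δ ≤ 1. Then ‖e^{−i(D+J)δ} − e^{−iDδ}e^{−iJδ}‖ ≤ δ², where ‖·‖ is the operator norm. -/

import Mathlib

open scoped ComplexOrder Matrix

/-- The trace norm `‖A‖₁ = Tr √(AᴴA)` of a complex square matrix. -/
noncomputable def traceNorm {n : Type*} [Fintype n] [DecidableEq n]
    (A : Matrix n n ℂ) : ℝ :=
  (((Matrix.posSemidef_conjTranspose_mul_self A).1.eigenvectorUnitary : Matrix n n ℂ) *
      Matrix.diagonal (((↑) : ℝ → ℂ) ∘ (√·) ∘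
        (Matrix.posSemidef_conjTranspose_mul_self A).1.eigenvalues) *
      (star (Matrix.posSemidef_conjTranspose_mul_self A).1.eigenvectorUnitary :
        Matrix n n ℂ)).trace.re

/-- The operator norm (largest singular value) of a complex square matrix. -/
noncomputable def opNorm {n : Type*} [Fintype n] [DecidableEq n]
    (A : Matrix n n ℂ) : ℝ :=
  ‖LinearMap.toContinuousLinearMap (Matrix.toEuclideanLin A)‖

/-!
Interpolate with `G t = exp ((1 - t) • (a + b)) * exp (t • a) * exp (t • b)`, which runs from
`exp (a + b)` to `exp a * exp b`. Its derivative is the middle factor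
`exp (t • a) * b * exp (t • -a) - b` sandwiched between unitaries when `a, b` are skew-adjoint,
and that conjugation moves with speed `‖⁅a, b⁆‖`, so `‖G' t‖ ≤ t ‖⁅a, b⁆‖`. Integrating over
`[0, 1]` gives `‖⁅a, b⁆‖ / 2 ≤ ‖a‖ ‖b‖`; for `a = -iδD`, `b = -iδJ` this is at most `δ²`.
-/

open NormedSpace

section BanachAlgebra

variable {A : Type*} [NormedRing A] [NormedAlgebra ℝ A] [CompleteSpace A]

theorem hasDerivAt_exp_smul_mul_mul_exp_smul_neg (a b : A) (s : ℝ) :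
    HasDerivAt (fun t : ℝ => exp (t • a) * b * exp (t • -a))
      (exp (s • a) * ⁅a, b⁆ * exp (s • -a)) s := by
  let : NormedAlgebra ℚ A := .restrictScalars ℚ ℝ A
  have hcomm : Commute (exp (s • -a)) (-a) := ((Commute.refl (-a)).smul_left s).exp_left
  refine (((hasDerivAt_exp_smul_const a s).mul_const b).mul
    (hasDerivAt_exp_smul_const (-a) s)).congr_deriv ?_
  rw [Ring.lie_def, mul_assoc _ b, hcomm.eq]
  noncomm_ring

theorem hasDerivAt_exp_one_sub_smul_add_mul_exp_smul_mul_exp_smul (a b : A) (s : ℝ) :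
    HasDerivAt (fun t : ℝ => exp ((1 - t) • (a + b)) * (exp (t • a) * exp (t • b)))
      (exp ((1 - s) • (a + b)) *
        ((exp (s • a) * b * exp (s • -a) - b) * (exp (s • a) * exp (s • b)))) s := by
  let : NormedAlgebra ℚ A := .restrictScalars ℚ ℝ A
  have hw : HasDerivAt (fun t : ℝ => exp ((1 - t) • (a + b)))
      (-(exp ((1 - s) • (a + b)) * (a + b))) s := by
    have := (hasDerivAt_exp_smul_const (a + b) (1 - s)).scomp s ((hasDerivAt_id s).const_sub 1)
    exact this.congr_deriv (by simp)
  have hau : a * exp (s • a) = exp (s • a) * a := ((Commute.refl a).smul_right s).exp_right.eq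
  have hbv : b * exp (s • b) = exp (s • b) * b := ((Commute.refl b).smul_right s).exp_right.eq
  have hinv : exp (s • -a) * exp (s • a) = 1 := by
    rw [smul_neg, ← exp_add_of_commute ((Commute.refl (s • a)).neg_left), neg_add_cancel, exp_zero]
  refine (hw.mul ((hasDerivAt_exp_smul_const a s).mul
    (hasDerivAt_exp_smul_const b s))).congr_deriv ?_
  simp only [Pi.mul_apply]
  have hcancel : (exp (s • a) * b * exp (s • -a) - b) * (exp (s • a) * exp (s • b)) =
      exp (s • a) * b * (exp (s • -a) * exp (s • a)) * exp (s • b) -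
        b * (exp (s • a) * exp (s • b)) := by noncomm_ring
  rw [hcancel, hinv, ← hau, ← hbv]
  noncomm_ring

theorem exp_smul_mem_unitary [StarRing A] [ContinuousStar A] [StarModule ℝ A] {a : A}
    (ha : a ∈ skewAdjoint A) (t : ℝ) : exp (t • a) ∈ unitary A :=
  let : NormedAlgebra ℚ A := .restrictScalars ℚ ℝ A
  exp_mem_unitary_of_mem_skewAdjoint (skewAdjoint.smul_mem t ha)

variable [StarRing A] [CStarRing A] [StarModule ℝ A]

theorem norm_exp_smul_mul_mul_exp_smul_neg_sub_le {a : A} (ha : a ∈ skewAdjoint A) (b : A)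
    (s : ℝ) : ‖exp (s • a) * b * exp (s • -a) - b‖ ≤ ‖⁅a, b⁆‖ * |s| := by
  have hbound (t : ℝ) : ‖exp (t • a) * ⁅a, b⁆ * exp (t • -a)‖ ≤ ‖⁅a, b⁆‖ := by
    rw [CStarRing.norm_mul_mem_unitary _ (exp_smul_mem_unitary (neg_mem ha) t),
      CStarRing.norm_mem_unitary_mul _ (exp_smul_mem_unitary ha t)]
  simpa using convex_univ.norm_image_sub_le_of_norm_hasDerivWithin_le
    (fun t _ => (hasDerivAt_exp_smul_mul_mul_exp_smul_neg a b t).hasDerivWithinAt)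
    (fun t _ => hbound t) (Set.mem_univ 0) (Set.mem_univ s)

theorem norm_exp_add_sub_exp_mul_exp_le_norm_lie {a b : A} (ha : a ∈ skewAdjoint A)
    (hb : b ∈ skewAdjoint A) : ‖exp (a + b) - exp a * exp b‖ ≤ ‖⁅a, b⁆‖ / 2 := by
  set G := fun t : ℝ => exp ((1 - t) • (a + b)) * (exp (t • a) * exp (t • b))
  have hG := hasDerivAt_exp_one_sub_smul_add_mul_exp_smul_mul_exp_smul a b
  have hG' (s : ℝ) (hs : s ∈ Set.Ico (0 : ℝ) 1) : ‖exp ((1 - s) • (a + b)) *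
      ((exp (s • a) * b * exp (s • -a) - b) * (exp (s • a) * exp (s • b)))‖ ≤ ‖⁅a, b⁆‖ * s := by
    rw [CStarRing.norm_mem_unitary_mul _ (exp_smul_mem_unitary (add_mem ha hb) _),
      CStarRing.norm_mul_mem_unitary _
        (mul_mem (exp_smul_mem_unitary ha s) (exp_smul_mem_unitary hb s))]
    simpa [abs_of_nonneg hs.1] using norm_exp_smul_mul_mul_exp_smul_neg_sub_le ha b s
  have hB (s : ℝ) : HasDerivAt (fun t : ℝ => ‖⁅a, b⁆‖ / 2 * t ^ 2) (‖⁅a, b⁆‖ * s) s := by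
    refine ((hasDerivAt_pow 2 s).const_mul (‖⁅a, b⁆‖ / 2)).congr_deriv ?_
    ring
  have hend := image_norm_le_of_norm_deriv_right_le_deriv_boundary (f := fun t => G t - G 0)
    (fun s _ => ((hG s).sub_const (G 0)).continuousAt.continuousWithinAt)
    (fun s _ => ((hG s).sub_const (G 0)).hasDerivWithinAt) (by simp) hB hG'
    (Set.right_mem_Icc.2 zero_le_one)
  rw [← norm_neg]
  simpa [G] using hend

theorem norm_exp_add_sub_exp_mul_exp_le {a b : A} (ha : a ∈ skewAdjoint A)
    (hb : b ∈ skewAdjoint A) : ‖exp (a + b) - exp a * exp b‖ ≤ ‖a‖ * ‖b‖ :=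
  calc ‖exp (a + b) - exp a * exp b‖ ≤ ‖⁅a, b⁆‖ / 2 :=
        norm_exp_add_sub_exp_mul_exp_le_norm_lie ha hb
    _ ≤ (‖a‖ * ‖b‖ + ‖b‖ * ‖a‖) / 2 := by
      rw [Ring.lie_def]
      gcongr
      exact (norm_sub_le _ _).trans (add_le_add (norm_mul_le _ _) (norm_mul_le _ _))
    _ = ‖a‖ * ‖b‖ := by ring

end BanachAlgebra

section Matrix

open scoped Matrix.Norms.L2Operator

variable {n : Type*} [Fintype n] [DecidableEq n]

theorem opNorm_nonneg (M : Matrix n n ℂ) : 0 ≤ opNorm M :=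
  norm_nonneg M

theorem opNorm_smul (c : ℂ) (M : Matrix n n ℂ) : opNorm (c • M) = ‖c‖ * opNorm M :=
  norm_smul c M

theorem opNorm_exp_add_sub_exp_mul_exp_le {a b : Matrix n n ℂ} (ha : a ∈ skewAdjoint _)
    (hb : b ∈ skewAdjoint _) : opNorm (exp (a + b) - exp a * exp b) ≤ opNorm a * opNorm b :=
  norm_exp_add_sub_exp_mul_exp_le ha hb

end Matrix

theorem trotter_error_bound_general {d : ℕ} (D J : Matrix (Fin d) (Fin d) ℂ)
    (hD : D.IsHermitian) (hJ : J.IsHermitian)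
    (hDn : opNorm D ≤ 1) (hJn : opNorm J ≤ 1)
    (δ : ℝ) :
    opNorm (NormedSpace.exp ((-(Complex.I * (δ : ℂ))) • (D + J)) -
        NormedSpace.exp ((-(Complex.I * (δ : ℂ))) • D) *
          NormedSpace.exp ((-(Complex.I * (δ : ℂ))) • J))
      ≤ δ ^ 2 := by
  have hskew {M : Matrix (Fin d) (Fin d) ℂ} (hM : M.IsHermitian) :
      (-(Complex.I * δ)) • M ∈ skewAdjoint _ :=
    hM.isSelfAdjoint.smul_mem_skewAdjoint (by simp [skewAdjoint.mem_iff])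
  have hsmall {M : Matrix (Fin d) (Fin d) ℂ} (hM : opNorm M ≤ 1) :
      opNorm ((-(Complex.I * δ)) • M) ≤ |δ| := by
    rw [opNorm_smul]
    simpa using mul_le_of_le_one_right (abs_nonneg δ) hM
  rw [smul_add]
  calc _ ≤ _ := opNorm_exp_add_sub_exp_mul_exp_le (hskew hD) (hskew hJ)
    _ ≤ |δ| * |δ| := mul_le_mul (hsmall hDn) (hsmall hJn) (opNorm_nonneg _) (abs_nonneg δ)
    _ = δ ^ 2 := by rw [← sq, sq_abs]

/-- First-order Trotter error bound: for Hermitian `D,J` of operator norm at most 1 and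
`0 < δ ≤ 1`, `‖e^{−i(D+J)δ} − e^{−iDδ}e^{−iJδ}‖ ≤ δ²`. -/
theorem trotter_error_bound {d : ℕ} (D J : Matrix (Fin d) (Fin d) ℂ)
    (hD : D.IsHermitian) (hJ : J.IsHermitian)
    (hDn : opNorm D ≤ 1) (hJn : opNorm J ≤ 1)
    (δ : ℝ) (hδ0 : 0 < δ) (hδ1 : δ ≤ 1) :
    opNorm (NormedSpace.exp ((-(Complex.I * (δ : ℂ))) • (D + J)) -
        NormedSpace.exp ((-(Complex.I * (δ : ℂ))) • D) *
          NormedSpace.exp ((-(Complex.I * (δ : ℂ))) • J))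
      ≤ δ ^ 2 :=
  trotter_error_bound_general D J hD hJ hDn hJn δ
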